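/- arXiv:1206.2937 — 2 statements merged into one kernel-verified Lean document; each statement's English description precedes it below -/
import Mathlib

section
/- Let L(p,x,ω) = K(p) + V(x,ω) with V(·,ω) ∈ [a,b] and K convex, superlinear, K(0)=0. If γ is a 1-approximate maximizer of the control problem with payoff g satisfying g(y) < g(0) + C₁(1 + |y|), then the terminal displacement satisfies K((γ(t)-γ(0))/t) ≤ 1 + (b-a) + C₁(1 + |γ(t)|)/t for all t ≥ 1; consequently |γ(t) - γ(0)| ≤ t·R₀ for a constant R₀ depending only on K, C₁, b-a. -/
open MeasureTheory

noncomputable section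

/-- An admissible path: a Lipschitz path starting at the origin, together with an
(a.e.) derivative function on `[0,t]`. -/
structure AdmPath (d : ℕ) (t : ℝ) where
  toFun : ℝ → EuclideanSpace ℝ (Fin d)
  deriv : ℝ → EuclideanSpace ℝ (Fin d)
  lipschitz : ∃ C, LipschitzWith C toFun
  init : toFun 0 = 0
  hasDeriv : ∀ᵐ s ∂volume, s ∈ Set.Icc 0 t → HasDerivAt toFun (deriv s) s

/-- The cost functional `𝓛(γ,ω) = ∫₀ᵗ K(γ'(s)) + V(γ(s)) ds`. -/
def pathCost {d : ℕ} (K V : EuclideanSpace ℝ (Fin d) → ℝ) (t : ℝ) (p : AdmPath d t) : ℝ :=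
  ∫ s in (0:ℝ)..t, (K (p.deriv s) + V (p.toFun s))

/-- Integrability of the cost integrand of a path. -/
def CostIntegrable {d : ℕ} (K V : EuclideanSpace ℝ (Fin d) → ℝ) (t : ℝ) (p : AdmPath d t) : Prop :=
  IntervalIntegrable (fun s => K (p.deriv s) + V (p.toFun s)) volume 0 t

/-- The payoff `g(γ(t)) − 𝓛(γ,ω)` of an admissible path. -/
def payoff {d : ℕ} (K V g : EuclideanSpace ℝ (Fin d) → ℝ) (t : ℝ) (p : AdmPath d t) : ℝ :=
  g (p.toFun t) - pathCost K V t p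

/-- `γ` is a `δ`-approximate optimizer: its payoff is within `δ` of the supremal payoff. -/
def IsApproxOpt {d : ℕ} (K V g : EuclideanSpace ℝ (Fin d) → ℝ) (t δ : ℝ) (p : AdmPath d t) : Prop :=
  ∀ q : AdmPath d t, CostIntegrable K V t q → payoff K V g t q ≤ payoff K V g t p + δ

/-- Superlinear growth: `K(z)/|z| → ∞` as `|z| → ∞`. -/
def Superlinear {d : ℕ} (K : EuclideanSpace ℝ (Fin d) → ℝ) : Prop :=
  ∀ M : ℝ, ∃ R : ℝ, ∀ z, R ≤ ‖z‖ → M * ‖z‖ ≤ K z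

/-- A random environment: an assignment of a potential value to each lattice cube. -/
abbrev Env (d : ℕ) := (Fin d → ℤ) → ℝ

/-- The potential `V(x,ω) = Σ_k ω_k 1_{Q_k}(x)`, i.e. the value of `ω` on the unit cube
`Q_k = k + [0,1)^d` containing `x`. -/
def pot {d : ℕ} (ω : Env d) (x : EuclideanSpace ℝ (Fin d)) : ℝ :=
  ω (fun i => ⌊x i⌋)

/-- `φ_j ω`: flip the value of the environment at index `j` between `a` and `b`. -/
def flipEnv {d : ℕ} (a b : ℝ) (j : Fin d → ℤ) (ω : Env d) : Env d :=
  Function.update ω j (a + b - ω j)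

/-- The occupation time `π_j(γ) = |{s ∈ [0,t] : γ(s) ∈ Q_j}|`. -/
def occTime {d : ℕ} (t : ℝ) (γ : ℝ → EuclideanSpace ℝ (Fin d)) (j : Fin d → ℤ) : ℝ :=
  (volume {s : ℝ | s ∈ Set.Icc 0 t ∧ (fun i => ⌊γ s i⌋) = j}).toReal

/-- `u` is the value function: for every environment `ω`, `u ω` is the least upper bound of
the payoffs of admissible paths with integrable cost. -/
def IsValueFun {d : ℕ} (K : EuclideanSpace ℝ (Fin d) → ℝ) (g : EuclideanSpace ℝ (Fin d) → ℝ)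
    (t : ℝ) (u : Env d → ℝ) : Prop :=
  ∀ ω : Env d, IsLUB {v : ℝ | ∃ p : AdmPath d t,
    CostIntegrable K (pot ω) t p ∧ v = payoff K (pot ω) g t p} (u ω)

end

/-!
Comparing with the path that rests at the origin, a 1-approximate optimizer has cost at most
`g(γ(t)) - g(0) + t b + 1`, while by Jensen's inequality its cost is at least
`t K((γ(t) - γ(0))/t) + t a`; this is the first bound. Together with the linear growth of `g`
it bounds `K(z)`, for `z = (γ(t) - γ(0))/t`, by an affine function of `|z|`, and superlinearity
of `K` then bounds `|z|` uniformly.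
-/

open Set
open scoped Interval NNReal

section Lipschitz

variable {F : Type*} [NormedAddCommGroup F] [NormedSpace ℝ F] {f f' : ℝ → F} {a b : ℝ}

theorem ae_restrict_uIoc_hasDerivAt (hd : ∀ᵐ s, s ∈ uIcc a b → HasDerivAt f (f' s) s) :
    ∀ᵐ s ∂volume.restrict (Ι a b), HasDerivAt f (f' s) s := by
  filter_upwards [ae_restrict_of_ae hd, ae_restrict_mem measurableSet_uIoc] with s hs hmem
  exact hs (uIoc_subset_uIcc hmem)

theorem LipschitzWith.intervalIntegrable_comp_of_ae_hasDerivAt [ProperSpace F] {C : ℝ≥0}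
    (hf : LipschitzWith C f) (hd : ∀ᵐ s, s ∈ uIcc a b → HasDerivAt f (f' s) s)
    {G : Type*} [NormedAddCommGroup G] {K : F → G} (hK : Continuous K) :
    IntervalIntegrable (fun s => K (f' s)) volume a b := by
  have hd' := ae_restrict_uIoc_hasDerivAt hd
  have hmeas : AEStronglyMeasurable f' (volume.restrict (Ι a b)) :=
    (stronglyMeasurable_deriv f).aestronglyMeasurable.congr
      (by filter_upwards [hd'] with s hs using hs.deriv)
  obtain ⟨M, hM⟩ := (isCompact_closedBall (0 : F) C).exists_bound_of_continuousOn hK.continuousOn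
  have hbound : ∀ᵐ s ∂volume.restrict (Ι a b), ‖K (f' s)‖ ≤ M := by
    filter_upwards [hd'] with s hs
    exact hM _ (mem_closedBall_zero_iff.2 (hs.le_of_lipschitz hf))
  have : IsFiniteMeasure (volume.restrict (Ι a b)) :=
    isFiniteMeasure_restrict.2 (by simp [Real.volume_uIoc])
  rw [intervalIntegrable_iff]
  exact Integrable.mono' (integrable_const M) (hK.comp_aestronglyMeasurable hmeas) hbound

/-- Reduces, through continuous linear functionals, to the real-valued FTC for absolutely
continuous functions. -/
theorem LipschitzWith.integral_eq_sub_of_ae_hasDerivAt [CompleteSpace F] {C : ℝ≥0}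
    (hf : LipschitzWith C f) (hd : ∀ᵐ s, s ∈ uIcc a b → HasDerivAt f (f' s) s)
    (hint : IntervalIntegrable f' volume a b) :
    ∫ s in a..b, f' s = f b - f a := by
  refine (SeparatingDual.eq_iff_forall_dual_eq (R := ℝ)).2 fun φ => ?_
  rw [← φ.intervalIntegral_comp_comm hint, φ.map_sub]
  have hac := ((φ.lipschitz.comp hf).lipschitzOnWith (s := uIcc a b)).absolutelyContinuousOnInterval
  refine (intervalIntegral.integral_congr_ae ?_).trans hac.integral_deriv_eq_sub
  filter_upwards [hd] with s hs hmem
  exact ((φ.hasFDerivAt.comp_hasDerivAt s (hs (uIoc_subset_uIcc hmem))).deriv).symm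

end Lipschitz

theorem ConvexOn.map_interval_average_le {E : Type*} [NormedAddCommGroup E] [NormedSpace ℝ E]
    [CompleteSpace E] {K : E → ℝ} (hK : ConvexOn ℝ univ K) (hKc : Continuous K)
    {f : ℝ → E} {a b : ℝ} (hab : a ≠ b) (hf : IntervalIntegrable f volume a b)
    (hKf : IntervalIntegrable (fun s => K (f s)) volume a b) :
    K (⨍ s in a..b, f s) ≤ ⨍ s in a..b, K (f s) := by
  refine hK.map_set_average_le hKc.continuousOn isClosed_univ ?_ ?_ (ae_of_all _ fun _ => trivial)
    (intervalIntegrable_iff.1 hf) (intervalIntegrable_iff.1 hKf)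
  · simpa [Real.volume_uIoc, sub_eq_zero] using hab.symm
  · simp [Real.volume_uIoc]

theorem Superlinear.exists_norm_le_of_le_affine {d : ℕ} {K : EuclideanSpace ℝ (Fin d) → ℝ}
    (hK : Superlinear K) (A B : ℝ) : ∃ R₀ > 0, ∀ z, K z ≤ A + B * ‖z‖ → ‖z‖ ≤ R₀ := by
  obtain ⟨R, hR⟩ := hK (|A| + B + 1)
  refine ⟨max R 1, by positivity, fun z hz => ?_⟩
  by_contra! hlt
  have hsl := hR z ((le_max_left R 1).trans hlt.le)
  have hz1 : 1 < ‖z‖ := (le_max_right R 1).trans_lt hlt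
  nlinarith [le_abs_self A, abs_nonneg A]

namespace AdmPath

variable {d : ℕ} {t : ℝ}

instance : Zero (AdmPath d t) :=
  ⟨⟨fun _ => 0, fun _ => 0, ⟨0, LipschitzWith.const _⟩, rfl,
    ae_of_all _ fun s _ => hasDerivAt_const s 0⟩⟩

variable {K V g : EuclideanSpace ℝ (Fin d) → ℝ}

theorem costIntegrable_zero : CostIntegrable K V t 0 :=
  show IntervalIntegrable (fun _ => K 0 + V 0) volume 0 t from intervalIntegrable_const

theorem payoff_zero (hK0 : K 0 = 0) : payoff K V g t 0 = g 0 - t * V 0 := by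
  simp [payoff, pathCost, hK0, show (0 : AdmPath d t).toFun = fun _ => 0 from rfl,
    show (0 : AdmPath d t).deriv = fun _ => 0 from rfl]

theorem ae_hasDerivAt (p : AdmPath d t) (ht : 0 ≤ t) :
    ∀ᵐ s, s ∈ uIcc 0 t → HasDerivAt p.toFun (p.deriv s) s := by
  simpa only [uIcc_of_le ht] using p.hasDeriv

theorem intervalIntegrable_comp_deriv (p : AdmPath d t) (ht : 0 ≤ t) {G : Type*}
    [NormedAddCommGroup G] {φ : EuclideanSpace ℝ (Fin d) → G} (hφ : Continuous φ) :
    IntervalIntegrable (fun s => φ (p.deriv s)) volume 0 t := by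
  obtain ⟨C, hC⟩ := p.lipschitz
  exact hC.intervalIntegrable_comp_of_ae_hasDerivAt (p.ae_hasDerivAt ht) hφ

theorem integral_deriv (p : AdmPath d t) (ht : 0 ≤ t) :
    ∫ s in (0 : ℝ)..t, p.deriv s = p.toFun t - p.toFun 0 := by
  obtain ⟨C, hC⟩ := p.lipschitz
  exact hC.integral_eq_sub_of_ae_hasDerivAt (p.ae_hasDerivAt ht)
    (p.intervalIntegrable_comp_deriv ht continuous_id)

theorem le_pathCost (hK : ConvexOn ℝ univ K) (ht : 0 < t) {m : ℝ} (hV : ∀ x, m ≤ V x)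
    (p : AdmPath d t) (hp : CostIntegrable K V t p) :
    t * K (t⁻¹ • (p.toFun t - p.toFun 0)) + t * m ≤ pathCost K V t p := by
  have hKc : Continuous K := continuousOn_univ.1 (hK.continuousOn isOpen_univ)
  have hKp := p.intervalIntegrable_comp_deriv ht.le hKc
  have hjensen := hK.map_interval_average_le (f := p.deriv) hKc ht.ne
    (p.intervalIntegrable_comp_deriv ht.le continuous_id) hKp
  rw [interval_average_eq, interval_average_eq, sub_zero, p.integral_deriv ht.le,
    smul_eq_mul] at hjensen
  have hkinetic : t * K (t⁻¹ • (p.toFun t - p.toFun 0)) ≤ ∫ s in (0 : ℝ)..t, K (p.deriv s) := by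
    rwa [← le_div_iff₀' ht, div_eq_inv_mul]
  have hpotential : (∫ s in (0 : ℝ)..t, K (p.deriv s)) + t * m ≤ pathCost K V t p := by
    have := intervalIntegral.integral_mono_on ht.le (hKp.add intervalIntegrable_const) hp
      fun s _ => add_le_add_right (hV (p.toFun s)) _
    rwa [intervalIntegral.integral_add hKp intervalIntegrable_const,
      intervalIntegral.integral_const, sub_zero, smul_eq_mul] at this
  linarith

end AdmPath

theorem IsApproxOpt.pathCost_le {d : ℕ} {K V g : EuclideanSpace ℝ (Fin d) → ℝ} {t δ : ℝ}
    {p : AdmPath d t} (hp : IsApproxOpt K V g t δ p) (hK0 : K 0 = 0) :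
    pathCost K V t p ≤ g (p.toFun t) - g 0 + t * V 0 + δ := by
  have := hp 0 AdmPath.costIntegrable_zero
  rw [AdmPath.payoff_zero hK0, payoff] at this
  linarith

theorem stmt2_general {d : ℕ} (K : EuclideanSpace ℝ (Fin d) → ℝ) (C₁ a b : ℝ)
    (hKconv : ConvexOn ℝ Set.univ K) (hK0 : K 0 = 0)
    (hKsl : Superlinear K) :
    ∃ R₀ : ℝ, 0 < R₀ ∧
      ∀ (V g : EuclideanSpace ℝ (Fin d) → ℝ) (t : ℝ) (p : AdmPath d t),
        (∀ x, V x ∈ Set.Icc a b) →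
        (∀ y, g y < g 0 + C₁ * (1 + ‖y‖)) →
        1 ≤ t →
        CostIntegrable K V t p →
        IsApproxOpt K V g t 1 p →
        K (t⁻¹ • (p.toFun t - p.toFun 0)) ≤ 1 + (b - a) + C₁ * (1 + ‖p.toFun t‖) / t
          ∧ ‖p.toFun t - p.toFun 0‖ ≤ t * R₀ := by
  obtain ⟨R₀, hR₀, hbound⟩ := hKsl.exists_norm_le_of_le_affine (1 + (b - a) + C₁) C₁
  refine ⟨R₀, hR₀, fun V g t p hV hg ht hp hopt => ?_⟩
  have ht0 : 0 < t := one_pos.trans_le ht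
  have hC₁ : 0 < C₁ := by simpa using hg 0
  set z := t⁻¹ • (p.toFun t - p.toFun 0)
  have hdisp : ‖p.toFun t - p.toFun 0‖ = t * ‖z‖ := by
    rw [norm_smul, norm_inv, Real.norm_of_nonneg ht0.le, mul_inv_cancel_left₀ ht0.ne']
  have hcost := AdmPath.le_pathCost hKconv ht0 (fun x => (hV x).1) p hp
  have hVb : t * V 0 ≤ t * b := mul_le_mul_of_nonneg_left (hV 0).2 ht0.le
  have hKz : K z ≤ 1 + (b - a) + C₁ * (1 + ‖p.toFun t‖) / t := by
    refine le_of_mul_le_mul_left ?_ ht0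
    rw [mul_add, mul_div_cancel₀ _ ht0.ne']
    linarith [hopt.pathCost_le hK0, hg (p.toFun t)]
  have hft : ‖p.toFun t‖ = t * ‖z‖ := by rw [← hdisp, p.init, sub_zero]
  have haffine : K z ≤ 1 + (b - a) + C₁ + C₁ * ‖z‖ := by
    have : C₁ * (1 + ‖p.toFun t‖) / t = C₁ / t + C₁ * ‖z‖ := by rw [hft]; field_simp
    linarith [div_le_self hC₁.le ht]
  exact ⟨hKz, hdisp ▸ mul_le_mul_of_nonneg_left (hbound z haffine) ht0.le⟩

/-- any 1-approximate optimizer `γ` satisfies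
`K((γ(t)−γ(0))/t) ≤ 1 + (b−a) + C₁(1+|γ(t)|)/t` for `t ≥ 1`, and consequently
`|γ(t) − γ(0)| ≤ t·R₀` for a constant `R₀` depending only on `K`, `C₁`, `b−a`. -/
theorem stmt2 {d : ℕ} (K : EuclideanSpace ℝ (Fin d) → ℝ) (C₁ a b : ℝ)
    (hKconv : ConvexOn ℝ Set.univ K) (hKnonneg : ∀ z, 0 ≤ K z) (hK0 : K 0 = 0)
    (hKsl : Superlinear K) (hab : a < b) :
    ∃ R₀ : ℝ, 0 < R₀ ∧
      ∀ (V g : EuclideanSpace ℝ (Fin d) → ℝ) (t : ℝ) (p : AdmPath d t),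
        (∀ x, V x ∈ Set.Icc a b) →
        (∀ y, g y < g 0 + C₁ * (1 + ‖y‖)) →
        1 ≤ t →
        CostIntegrable K V t p →
        IsApproxOpt K V g t 1 p →
        K (t⁻¹ • (p.toFun t - p.toFun 0)) ≤ 1 + (b - a) + C₁ * (1 + ‖p.toFun t‖) / t
          ∧ ‖p.toFun t - p.toFun 0‖ ≤ t * R₀ :=
  stmt2_general K C₁ a b hKconv hK0 hKsl
end

section
/- Let Ω₀ = {a,b}^{m²} with product measure P₀ having marginals P₀'(a) = α, P₀'(b) = 1−α, α ∈ (0,1). Then there exists a constant C > 0 independent of m and a function h̃ : Ω₀ → {0,1,…,m−1} such that (i) P₀(h̃ = i) ≤ C/m for all i ∈ {0,…,m−1}, and (ii) |h̃(x) − h̃(y)| ≤ 1 whenever x, y ∈ Ω₀ differ in at most one coordinate. -/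
open MeasureTheory

/-- The Bernoulli-type measure on `{a,b}` (modeled by `Bool`, `a ↦ true`) with
`μ({a}) = α`, `μ({b}) = 1 − α`. -/
noncomputable def bern (α : ℝ) : Measure Bool :=
  ENNReal.ofReal α • Measure.dirac true + ENNReal.ofReal (1 - α) • Measure.dirac false

/-- The product measure `P₀` on `Ω₀ = {a,b}^{m²}`. -/
noncomputable def P0 (α : ℝ) (n : ℕ) : Measure (Fin n → Bool) :=
  Measure.pi fun _ => bern α

/-!
Take `h̃ x = zigzag m (number of a's in x)`, where `zigzag m` folds `ℕ` onto `{0, …, m-1}` along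
the triangle wave `0, 1, …, m-1, m-1, …, 1, 0, 0, 1, …` of period `2m`; it moves by at most one
when a single coordinate flips. Each value of `h̃` comes from two residues mod `M = 2m` of the
count `S ~ Bin(n, α)`, `n = m²`, so it suffices that `S` is nearly equidistributed mod `M`.
By the roots-of-unity filter, `M · P(S ≡ a) ≤ ∑_{j mod M} |1 - α + α e^{2πij/M}|ⁿ`, and
`|1 - α + α e^{iθ}|² = 1 - 2α(1-α)(1 - cos θ) ≤ exp(-4α(1-α)θ²/π²)` for `|θ| ≤ π`. Since
`M² ≤ 4n`, the term of `j` is at most `ρ^|k|` with `ρ = exp(-2α(1-α))` and `k` the representative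
of `j` in `(-M/2, M/2]`; hence `M · P(S ≡ a) ≤ ∑_{k ∈ ℤ} ρ^|k|`, independently of `m`.
-/

open Finset Real

section Counting

variable {ι : Type*} [Fintype ι]

def countTrue (x : ι → Bool) : ℕ := ∑ i, (x i).toNat

lemma abs_countTrue_sub_le {x y : ι → Bool} {j : ι} (h : ∀ i, i ≠ j → x i = y i) :
    |(countTrue x : ℤ) - countTrue y| ≤ 1 := by
  have hsub : (countTrue x : ℤ) - countTrue y = (x j).toNat - (y j).toNat := by
    simp only [countTrue, Nat.cast_sum, ← sum_sub_distrib]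
    exact sum_eq_single j (fun i _ hi => by simp [h i hi]) (by simp)
  rw [hsub]
  cases x j <;> cases y j <;> simp

def bernWeight (α : ℝ) (b : Bool) : ℝ := if b then α else 1 - α

lemma bernWeight_nonneg {α : ℝ} (hα0 : 0 ≤ α) (hα1 : α ≤ 1) (b : Bool) :
    0 ≤ bernWeight α b := by
  cases b <;> simp [bernWeight] <;> linarith

lemma sum_prod_bernWeight_mul_pow [DecidableEq ι] (α : ℝ) (z : ℂ) :
    ∑ x : ι → Bool, (∏ i, (bernWeight α (x i) : ℂ)) * z ^ countTrue x
      = (1 - α + α * z) ^ Fintype.card ι := by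
  have hBool : ∑ b : Bool, (bernWeight α b : ℂ) * z ^ b.toNat = 1 - α + α * z := by
    simp [bernWeight, add_comm]
  calc ∑ x : ι → Bool, (∏ i, (bernWeight α (x i) : ℂ)) * z ^ countTrue x
      = ∑ x : ι → Bool, ∏ i, (bernWeight α (x i) : ℂ) * z ^ (x i).toNat := by
        simp only [prod_mul_distrib, prod_pow_eq_pow_sum, countTrue]
    _ = ∏ _i : ι, ∑ b : Bool, (bernWeight α b : ℂ) * z ^ b.toNat := by
        rw [Fintype.prod_sum]
    _ = (1 - α + α * z) ^ Fintype.card ι := by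
        rw [hBool, prod_const, card_univ]

end Counting

lemma natCast_mul_sum_filter_eq {Ω : Type*} [Fintype Ω] {M : ℕ} [NeZero M] (f : Ω → ℂ)
    (c : Ω → ℕ) (a : ZMod M) :
    (M : ℂ) * ∑ x ∈ univ.filter (fun x => (c x : ZMod M) = a), f x
      = ∑ j : ZMod M, ZMod.stdAddChar (-(j * a)) * ∑ x, f x * ZMod.stdAddChar j ^ c x := by
  have hchar : ∀ j x, ZMod.stdAddChar (-(j * a)) * ZMod.stdAddChar j ^ c x
      = ZMod.stdAddChar (j * ((c x : ZMod M) - a)) := by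
    intro j x
    rw [← AddChar.map_nsmul_eq_pow, ← AddChar.map_add_eq_mul, nsmul_eq_mul, mul_sub,
      neg_add_eq_sub, mul_comm (c x : ZMod M)]
  simp_rw [mul_sum, mul_left_comm _ (f _), hchar]
  rw [sum_comm]
  simp_rw [← mul_sum, AddChar.sum_mulShift _ (ZMod.isPrimitive_stdAddChar M), sub_eq_zero]
  rw [sum_filter, mul_sum]
  refine sum_congr rfl fun x _ => ?_
  split_ifs <;> simp [ZMod.card, mul_comm]

lemma norm_sq_one_sub_add_mul_exp (α θ : ℝ) :
    ‖(1 - α : ℂ) + α * Complex.exp (θ * Complex.I)‖ ^ 2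
      = 1 - 2 * α * (1 - α) * (1 - cos θ) := by
  rw [Complex.sq_norm, Complex.normSq_apply]
  simp only [Complex.exp_mul_I, ← Complex.ofReal_cos, ← Complex.ofReal_sin, Complex.add_re,
    Complex.add_im, Complex.mul_re, Complex.mul_im, Complex.sub_re, Complex.sub_im,
    Complex.one_re, Complex.one_im, Complex.ofReal_re, Complex.ofReal_im, Complex.I_re,
    Complex.I_im]
  linear_combination α ^ 2 * sin_sq_add_cos_sq θ

lemma norm_one_sub_add_mul_exp_le {α θ : ℝ} (hα0 : 0 ≤ α) (hα1 : α ≤ 1) (hθ : |θ| ≤ π) :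
    ‖(1 - α : ℂ) + α * Complex.exp (θ * Complex.I)‖
      ≤ exp (-(α * (1 - α) * (2 / π ^ 2 * θ ^ 2))) := by
  have hαβ : 0 ≤ α * (1 - α) := mul_nonneg hα0 (by linarith)
  have hcos : 2 / π ^ 2 * θ ^ 2 ≤ 1 - cos θ := by linarith [cos_le_one_sub_mul_cos_sq hθ]
  set c := α * (1 - α) * (2 / π ^ 2 * θ ^ 2)
  rw [← pow_le_pow_iff_left₀ (norm_nonneg _) (exp_pos _).le two_ne_zero]
  calc ‖(1 - α : ℂ) + α * Complex.exp (θ * Complex.I)‖ ^ 2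
      = 1 - 2 * α * (1 - α) * (1 - cos θ) := norm_sq_one_sub_add_mul_exp α θ
    _ ≤ -(2 * c) + 1 := by nlinarith [mul_le_mul_of_nonneg_left hcos hαβ]
    _ ≤ exp (-(2 * c)) := add_one_le_exp _
    _ = exp (-c) ^ 2 := by rw [← exp_nat_mul]; ring_nf

lemma norm_one_sub_add_mul_stdAddChar_pow_le {α : ℝ} (hα0 : 0 ≤ α) (hα1 : α ≤ 1) {M n : ℕ}
    [NeZero M] (hMn : M ^ 2 ≤ 4 * n) (j : ZMod M) :
    ‖(1 - α : ℂ) + α * ZMod.stdAddChar j‖ ^ n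
      ≤ exp (-(2 * α * (1 - α))) ^ j.valMinAbs.natAbs := by
  set θ : ℝ := 2 * π * j.valMinAbs / M
  set d := j.valMinAbs.natAbs
  have hM : (0 : ℝ) < M := by exact_mod_cast Nat.pos_of_neZero M
  have hdM : 2 * (d : ℝ) ≤ M := by
    exact_mod_cast (by have := ZMod.natAbs_valMinAbs_le j; omega : 2 * d ≤ M)
  have hd : (d : ℝ) = |(j.valMinAbs : ℝ)| := by rw [Nat.cast_natAbs, Int.cast_abs]
  have hθsq : θ ^ 2 = 4 * π ^ 2 * d ^ 2 / M ^ 2 := by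
    rw [hd, sq_abs]
    simp only [θ]
    ring
  have hθ : |θ| ≤ π := by
    rw [abs_div, abs_mul, abs_of_pos (by positivity : 0 < 2 * π), abs_of_pos hM, ← hd,
      div_le_iff₀ hM]
    nlinarith [pi_pos]
  have hchar : (ZMod.stdAddChar j : ℂ) = Complex.exp (θ * Complex.I) := by
    rw [← ZMod.coe_valMinAbs j, ZMod.stdAddChar_coe]
    push_cast [θ]
    congr 1
    ring
  have hαβ : 0 ≤ α * (1 - α) := mul_nonneg hα0 (by linarith)
  have hdd : (d : ℝ) ≤ d ^ 2 := by exact_mod_cast Nat.le_self_pow two_ne_zero d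
  have hMn' : (M : ℝ) ^ 2 ≤ 4 * n := by exact_mod_cast hMn
  calc ‖(1 - α : ℂ) + α * ZMod.stdAddChar j‖ ^ n
      ≤ exp (-(α * (1 - α) * (2 / π ^ 2 * θ ^ 2))) ^ n := by
        rw [hchar]
        exact pow_le_pow_left₀ (norm_nonneg _) (norm_one_sub_add_mul_exp_le hα0 hα1 hθ) n
    _ = exp (-(8 * (α * (1 - α)) * d ^ 2 * n / M ^ 2)) := by
        rw [← exp_nat_mul, hθsq]
        congr 1
        field_simp
        ring
    _ ≤ exp (-(2 * α * (1 - α) * d)) := by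
        gcongr
        rw [le_div_iff₀ (by positivity)]
        calc 2 * α * (1 - α) * d * M ^ 2 = 2 * (α * (1 - α)) * d * M ^ 2 := by ring
          _ ≤ 2 * (α * (1 - α)) * d ^ 2 * (4 * n) := by gcongr
          _ = _ := by ring
    _ = exp (-(2 * α * (1 - α))) ^ d := by
        rw [← exp_nat_mul]
        ring_nf

lemma summable_pow_natAbs {ρ : ℝ} (h0 : 0 ≤ ρ) (h1 : ρ < 1) :
    Summable fun k : ℤ => ρ ^ k.natAbs :=
  .of_nat_of_neg (by simpa using summable_geometric_of_lt_one h0 h1)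
    (by simpa using summable_geometric_of_lt_one h0 h1)

lemma sum_pow_natAbs_valMinAbs_le {ρ : ℝ} (h0 : 0 ≤ ρ) (h1 : ρ < 1) (M : ℕ) [NeZero M] :
    ∑ j : ZMod M, ρ ^ j.valMinAbs.natAbs ≤ ∑' k : ℤ, ρ ^ k.natAbs := by
  classical
  rw [← Finset.sum_image (g := ZMod.valMinAbs) (f := fun k : ℤ => ρ ^ k.natAbs)
    fun a _ b _ h => ZMod.injective_valMinAbs h]
  exact (summable_pow_natAbs h0 h1).sum_le_tsum _ fun _ _ => pow_nonneg h0 _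

lemma natCast_mul_sum_filter_countTrue_le {ι : Type*} [Fintype ι] [DecidableEq ι] {α : ℝ}
    (hα0 : 0 ≤ α) (hα1 : α ≤ 1) {M : ℕ} [NeZero M] (a : ZMod M) :
    (M : ℝ) * ∑ x ∈ univ.filter (fun x : ι → Bool => (countTrue x : ZMod M) = a),
        ∏ i, bernWeight α (x i)
      ≤ ∑ j : ZMod M, ‖(1 - α : ℂ) + α * ZMod.stdAddChar j‖ ^ Fintype.card ι := by
  have hnonneg : 0 ≤ (M : ℝ) * ∑ x ∈ univ.filter (fun x : ι → Bool => (countTrue x : ZMod M) = a),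
      ∏ i, bernWeight α (x i) :=
    mul_nonneg M.cast_nonneg
      (sum_nonneg fun x _ => prod_nonneg fun i _ => bernWeight_nonneg hα0 hα1 _)
  rw [← Complex.norm_of_nonneg hnonneg]
  push_cast
  rw [natCast_mul_sum_filter_eq]
  refine (norm_sum_le _ _).trans_eq (sum_congr rfl fun j _ => ?_)
  rw [sum_prod_bernWeight_mul_pow, norm_mul, ZMod.stdAddChar_apply (-(j * a)), Circle.norm_coe,
    one_mul, norm_pow]

instance isFiniteMeasure_bern (α : ℝ) : IsFiniteMeasure (bern α) :=
  ⟨by simp [bern, ENNReal.add_lt_top]⟩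

lemma bern_singleton (α : ℝ) (b : Bool) : bern α {b} = ENNReal.ofReal (bernWeight α b) := by
  cases b <;> simp [bern, bernWeight]

lemma P0_coe_finset {α : ℝ} (hα0 : 0 ≤ α) (hα1 : α ≤ 1) {n : ℕ} (s : Finset (Fin n → Bool)) :
    P0 α n s = ENNReal.ofReal (∑ x ∈ s, ∏ i, bernWeight α (x i)) := by
  rw [← sum_measure_singleton, ENNReal.ofReal_sum_of_nonneg
    fun x _ => prod_nonneg fun i _ => bernWeight_nonneg hα0 hα1 _]
  refine sum_congr rfl fun x _ => ?_
  rw [P0, Measure.pi_singleton, ENNReal.ofReal_prod_of_nonneg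
    fun i _ => bernWeight_nonneg hα0 hα1 _]
  simp only [bern_singleton]

theorem P0_countTrue_natCast_eq_le {α : ℝ} (hα0 : 0 < α) (hα1 : α < 1) {n M : ℕ} [NeZero M]
    (hMn : M ^ 2 ≤ 4 * n) (a : ZMod M) :
    P0 α n {x | (countTrue x : ZMod M) = a}
      ≤ ENNReal.ofReal ((∑' k : ℤ, exp (-(2 * α * (1 - α))) ^ k.natAbs) / M) := by
  have hρ1 : exp (-(2 * α * (1 - α))) < 1 := exp_lt_one_iff.2 (by nlinarith)
  have hM : (0 : ℝ) < M := by exact_mod_cast Nat.pos_of_neZero M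
  have hset : {x : Fin n → Bool | (countTrue x : ZMod M) = a}
      = ↑(univ.filter fun x : Fin n → Bool => (countTrue x : ZMod M) = a) := by
    ext; simp
  rw [hset, P0_coe_finset hα0.le hα1.le]
  refine ENNReal.ofReal_le_ofReal ?_
  rw [le_div_iff₀ hM, mul_comm]
  calc _ ≤ ∑ j : ZMod M, ‖(1 - α : ℂ) + α * ZMod.stdAddChar j‖ ^ Fintype.card (Fin n) :=
        natCast_mul_sum_filter_countTrue_le hα0.le hα1.le a
    _ ≤ ∑ j : ZMod M, exp (-(2 * α * (1 - α))) ^ j.valMinAbs.natAbs := by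
        refine sum_le_sum fun j _ => ?_
        rw [Fintype.card_fin]
        exact norm_one_sub_add_mul_stdAddChar_pow_le hα0.le hα1.le hMn j
    _ ≤ _ := sum_pow_natAbs_valMinAbs_le (exp_pos _).le hρ1 M

def zigzag (m k : ℕ) : ℕ := min (k % (2 * m)) (2 * m - 1 - k % (2 * m))

lemma zigzag_lt {m : ℕ} (hm : 0 < m) (k : ℕ) : zigzag m k < m := by
  have := Nat.mod_lt k (by omega : 0 < 2 * m)
  unfold zigzag
  omega

lemma abs_zigzag_succ_sub_le (m k : ℕ) : |(zigzag m (k + 1) : ℤ) - zigzag m k| ≤ 1 := by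
  rcases Nat.eq_zero_or_pos m with rfl | hm
  · simp [zigzag]
  have hlt := Nat.mod_lt k (by omega : 0 < 2 * m)
  have hsucc := Nat.add_mod_eq_ite (k := 2 * m) (m := k) (n := 1)
  rw [Nat.mod_eq_of_lt (by omega : 1 < 2 * m)] at hsucc
  unfold zigzag
  rw [abs_le]
  split_ifs at hsucc <;> omega

lemma abs_zigzag_sub_le (m : ℕ) {a b : ℕ} (h : |(a : ℤ) - b| ≤ 1) :
    |(zigzag m a : ℤ) - zigzag m b| ≤ 1 := by
  rcases (show a = b ∨ a = b + 1 ∨ b = a + 1 by rw [abs_le] at h; omega) with rfl | rfl | rfl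
  · simp
  · exact abs_zigzag_succ_sub_le m b
  · rw [abs_sub_comm]
    exact abs_zigzag_succ_sub_le m a

lemma natCast_eq_or_of_zigzag_eq {m k i : ℕ} (hm : 0 < m) (h : zigzag m k = i) :
    (k : ZMod (2 * m)) = i ∨ (k : ZMod (2 * m)) = (2 * m - 1 - i : ℕ) := by
  have := Nat.mod_lt k (by omega : 0 < 2 * m)
  unfold zigzag at h
  rw [← ZMod.natCast_mod k]
  rcases (by omega : k % (2 * m) = i ∨ k % (2 * m) = 2 * m - 1 - i) with h | h <;> rw [h]
  · exact .inl rfl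
  · exact .inr rfl

/-- the Benjamini–Kalai–Schramm averaging lemma: there is `C > 0`
independent of `m` and a function `h̃ : Ω₀ → {0,…,m−1}` such that
(i) `P₀(h̃ = i) ≤ C/m` for all `i`, and (ii) `|h̃(x) − h̃(y)| ≤ 1` whenever `x,y`
differ in at most one coordinate. -/
theorem stmt15 (α : ℝ) (hα : 0 < α) (hα1 : α < 1) :
    ∃ C : ℝ, 0 < C ∧ ∀ m : ℕ, 0 < m →
      ∃ htil : (Fin (m ^ 2) → Bool) → ℕ,
        (∀ x, htil x < m)
        ∧ (∀ i : ℕ, P0 α (m ^ 2) {x | htil x = i} ≤ ENNReal.ofReal (C / m))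
        ∧ (∀ x y : Fin (m ^ 2) → Bool,
            (∃ j, ∀ i, i ≠ j → x i = y i) → |(htil x : ℤ) - (htil y : ℤ)| ≤ 1) := by
  set ρ := exp (-(2 * α * (1 - α)))
  have hρ1 : ρ < 1 := exp_lt_one_iff.2 (by nlinarith)
  have hK : 1 ≤ ∑' k : ℤ, ρ ^ k.natAbs := by
    simpa using (summable_pow_natAbs (exp_pos _).le hρ1).le_tsum 0 fun k _ => by positivity
  refine ⟨∑' k : ℤ, ρ ^ k.natAbs, one_pos.trans_le hK,
    fun m hm => ⟨fun x => zigzag m (countTrue x), fun x => zigzag_lt hm _, fun i => ?_,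
      fun x y ⟨j, hj⟩ => abs_zigzag_sub_le m (abs_countTrue_sub_le hj)⟩⟩
  have : NeZero (2 * m) := ⟨by omega⟩
  have hMn : (2 * m) ^ 2 ≤ 4 * m ^ 2 := (by ring : (2 * m) ^ 2 = 4 * m ^ 2).le
  calc P0 α (m ^ 2) {x | zigzag m (countTrue x) = i}
      ≤ P0 α (m ^ 2) ({x | (countTrue x : ZMod (2 * m)) = i}
          ∪ {x | (countTrue x : ZMod (2 * m)) = (2 * m - 1 - i : ℕ)}) :=
        measure_mono fun x hx => natCast_eq_or_of_zigzag_eq hm hx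
    _ ≤ ENNReal.ofReal ((∑' k : ℤ, ρ ^ k.natAbs) / (2 * m : ℕ))
        + ENNReal.ofReal ((∑' k : ℤ, ρ ^ k.natAbs) / (2 * m : ℕ)) :=
        (measure_union_le _ _).trans (add_le_add (P0_countTrue_natCast_eq_le hα hα1 hMn _)
          (P0_countTrue_natCast_eq_le hα hα1 hMn _))
    _ = ENNReal.ofReal ((∑' k : ℤ, ρ ^ k.natAbs) / m) := by
        rw [← ENNReal.ofReal_add (by positivity) (by positivity)]
        congr 1
        push_cast
        field_simp
        ring
end
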